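/- arXiv:1809.05212 — 5 statements merged into one kernel-verified Lean document; each statement's English description precedes it below -/
import Mathlib

section
/- For every integer k ≥ 1 and every real x with 0 < x < π, the inequality c_k · sin(x)^k ≤ M_k · g_k(x) holds, where c_k = Γ(k/2 + 1) / (√π · Γ(k/2 + 1/2)), g_k(x) = x^k (π − x)^k / (B(k+1, k+1) · π^(2k+1)) with B the Euler beta function, and M_k = √π · 2^(k−1) · Γ(k/2 + 1)^2 / Γ(k + 3/2). -/
/-!
With `t = x - π / 2`, the bound `sin x ≤ 4 x (π - x) / π²` reads `cos t ≤ 1 - 4 t² / π²`, which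
follows from `cos t = 1 - 2 sin² (t / 2)` and the chord bound `sin y ≥ (2 √2 / π) y` on `[0, π / 4]`
(concavity of `sin`). Raising it to the `k`-th power gives
`c_k sin^k x ≤ c_k (4 / π²)^k x^k (π - x)^k`, and two instances of Legendre's duplication formula
show that `c_k (4 / π²)^k` is exactly `M_k / (B(k + 1, k + 1) π^(2k + 1))`.
-/

open Real

namespace Real

lemma mul_le_sin_of_le_pi_div_four {x : ℝ} (hx₀ : 0 ≤ x) (hx : x ≤ π / 4) :
    2 * √2 / π * x ≤ sin x := by
  have hπ := pi_pos
  have key := strictConcaveOn_sin_Icc.concaveOn.2 ⟨le_rfl, hπ.le⟩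
    (show π / 4 ∈ Set.Icc 0 π from ⟨by positivity, by linarith⟩)
    (sub_nonneg.2 ((div_le_one (by positivity)).2 hx)) (div_nonneg hx₀ (by positivity))
    (sub_add_cancel 1 (x / (π / 4)))
  simp only [smul_eq_mul, mul_zero, sin_zero, zero_add, sin_pi_div_four] at key
  rw [div_mul_cancel₀ x (by positivity)] at key
  calc 2 * √2 / π * x = x / (π / 4) * (√2 / 2) := by field_simp; ring
    _ ≤ sin x := key

lemma cos_le_one_sub_four_div_pi_sq_mul_sq {x : ℝ} (hx : |x| ≤ π / 2) :
    cos x ≤ 1 - 4 / π ^ 2 * x ^ 2 := by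
  wlog hx₀ : 0 ≤ x
  case inr => simpa using this (by rwa [abs_neg]) <| neg_nonneg.2 <| le_of_not_ge hx₀
  rw [abs_of_nonneg hx₀] at hx
  have hchord := mul_le_sin_of_le_pi_div_four (x := x / 2) (by positivity) (by linarith)
  have hsq := (pow_le_pow_left₀ (by positivity) hchord 2).trans_eq (sin_sq_eq_half_sub _)
  rw [mul_pow, div_pow, mul_pow, sq_sqrt zero_le_two, mul_div_cancel₀ x two_ne_zero] at hsq
  have hπ := pi_pos
  field_simp at hsq ⊢
  linarith

lemma sin_le_four_div_pi_sq_mul {x : ℝ} (hx₀ : 0 ≤ x) (hx : x ≤ π) :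
    sin x ≤ 4 / π ^ 2 * (x * (π - x)) := by
  have h := cos_le_one_sub_four_div_pi_sq_mul_sq (x := x - π / 2)
    (abs_le.2 ⟨by linarith, by linarith⟩)
  rw [cos_sub_pi_div_two] at h
  calc sin x ≤ 1 - 4 / π ^ 2 * (x - π / 2) ^ 2 := h
    _ = 4 / π ^ 2 * (x * (π - x)) := by field_simp; ring

lemma Gamma_half_add_half_mul_Gamma_half_add_one (s : ℝ) :
    Gamma (s / 2 + 1 / 2) * Gamma (s / 2 + 1) = √π * Gamma (s + 1) / 2 ^ s := by
  have h := Gamma_mul_Gamma_add_half (s / 2 + 1 / 2)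
  rw [show s / 2 + 1 / 2 + 1 / 2 = s / 2 + 1 by ring, show 2 * (s / 2 + 1 / 2) = s + 1 by ring,
    show 1 - (s + 1) = -s by ring, rpow_neg zero_le_two] at h
  rw [h, div_eq_mul_inv]
  ring

end Real

lemma rejection_coeff_eq (k : ℕ) (hk : 1 ≤ k) :
    √π * 2 ^ (k - 1) * Gamma ((k : ℝ) / 2 + 1) ^ 2 / Gamma ((k : ℝ) + 3 / 2) /
      ((Gamma ((k : ℝ) + 1) * Gamma ((k : ℝ) + 1) / Gamma ((k : ℝ) + 1 + ((k : ℝ) + 1))) *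
        π ^ (2 * k + 1)) =
    Gamma ((k : ℝ) / 2 + 1) / (√π * Gamma ((k : ℝ) / 2 + 1 / 2)) * (4 / π ^ 2) ^ k := by
  have hA := Gamma_half_add_half_mul_Gamma_half_add_one k
  have hB := Gamma_half_add_half_mul_Gamma_half_add_one ((2 * k + 1 : ℕ) : ℝ)
  rw [rpow_natCast] at hA hB
  push_cast at hB
  rw [show (2 * k + 1 : ℝ) / 2 + 1 / 2 = k + 1 by ring,
    show (2 * k + 1 : ℝ) / 2 + 1 = k + 3 / 2 by ring,
    show (2 * k + 1 + 1 : ℝ) = k + 1 + (k + 1) by ring] at hB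
  have hpow : (2 : ℝ) ^ (k - 1) = 2 ^ k / 2 := by
    rw [eq_div_iff two_ne_zero, ← pow_succ, Nat.sub_add_cancel hk]
  have hπ : π = √π ^ 2 := (sq_sqrt pi_pos.le).symm
  have hs : 0 < √π := sqrt_pos.2 pi_pos
  have hG : 0 < Gamma ((k : ℝ) / 2 + 1) := by positivity
  have hF : 0 < Gamma ((k : ℝ) + 1) := by positivity
  have hT : 0 < Gamma ((k : ℝ) + 3 / 2) := by positivity
  rw [hpow, show (4 : ℝ) = 2 ^ 2 by norm_num, div_pow, ← pow_mul, ← pow_mul]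
  rw [← eq_div_iff (by positivity)] at hA
  rw [eq_div_iff (by positivity)] at hB
  generalize Gamma ((k : ℝ) / 2 + 1) = G at *
  generalize Gamma ((k : ℝ) / 2 + 1 / 2) = H at *
  generalize Gamma ((k : ℝ) + 1) = F at *
  generalize Gamma ((k : ℝ) + 3 / 2) = T at *
  generalize Gamma ((k : ℝ) + 1 + ((k : ℝ) + 1)) = D at *
  generalize √π = s at *
  rw [hπ, hA, show D = F * T * 2 ^ (2 * k + 1) / s by rw [eq_div_iff hs.ne', hB]; ring]
  field_simp
  ring

theorem sin_pow_le_envelope (k : ℕ) (hk : 1 ≤ k) (x : ℝ) (hx0 : 0 < x) (hxπ : x < π) :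
    (Gamma ((k : ℝ) / 2 + 1) / (Real.sqrt π * Gamma ((k : ℝ) / 2 + 1 / 2))) * Real.sin x ^ k ≤
      (Real.sqrt π * 2 ^ (k - 1) * Gamma ((k : ℝ) / 2 + 1) ^ 2 / Gamma ((k : ℝ) + 3 / 2)) *
        (x ^ k * (π - x) ^ k /
          ((Gamma ((k : ℝ) + 1) * Gamma ((k : ℝ) + 1) / Gamma ((k : ℝ) + 1 + ((k : ℝ) + 1))) *
            π ^ (2 * k + 1))) := by
  have hsin : 0 ≤ sin x := sin_nonneg_of_nonneg_of_le_pi hx0.le hxπ.le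
  calc _ ≤ Gamma ((k : ℝ) / 2 + 1) / (√π * Gamma ((k : ℝ) / 2 + 1 / 2)) *
        (4 / π ^ 2 * (x * (π - x))) ^ k := by
        gcongr
        exact sin_le_four_div_pi_sq_mul hx0.le hxπ.le
    _ = Gamma ((k : ℝ) / 2 + 1) / (√π * Gamma ((k : ℝ) / 2 + 1 / 2)) * (4 / π ^ 2) ^ k *
        (x ^ k * (π - x) ^ k) := by rw [mul_pow, mul_pow]; ring
    _ = _ := by rw [← rejection_coeff_eq k hk]; ring
end

section
/- For every integer k ≥ 1, M_k is the supremum over x ∈ (0, π) of the likelihood ratio f_k(x)/g_k(x), and this supremum is attained at x = π/2; that is, f_k(x)/g_k(x) ≤ f_k(π/2)/g_k(π/2) = M_k for all x ∈ (0, π). -/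
/-!
On `[0, π]` the parabola `4 x (π - x) / π²` lies above `sin x` and touches it at `π / 2`
(write `x = π / 2 + t`, use `cos t = 1 - 2 sin² (t / 2)` and bound `sin (t / 2)` from below by
its chord over `[0, π / 4]`). Hence `sin x / (x (π - x))` is maximal at `π / 2`, and so is its
`k`-th power, which is the likelihood ratio up to a constant factor. The value at `π / 2` is
rewritten into `M_k` by Legendre's duplication formula, applied at `k / 2 + 1 / 2` and `k + 1`.
-/

open Real

lemma mul_sin_le_mul_sin {u a : ℝ} (hu : 0 ≤ u) (hua : u ≤ a) (ha : a ≤ π) :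
    u * sin a ≤ a * sin u := by
  rcases hu.eq_or_lt with rfl | hu
  · simp
  have ha0 : 0 < a := hu.trans_le hua
  have hchord := strictConcaveOn_sin_Icc.concaveOn.2 ⟨le_rfl, pi_pos.le⟩ ⟨ha0.le, ha⟩
    (sub_nonneg.2 ((div_le_one ha0).2 hua)) (div_nonneg hu.le ha0.le) (sub_add_cancel 1 (u / a))
  simp only [smul_eq_mul, mul_zero, zero_add, sin_zero, div_mul_cancel₀ u ha0.ne'] at hchord
  rwa [div_mul_eq_mul_div, div_le_iff₀ ha0, mul_comm (sin u)] at hchord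

lemma cos_le_one_sub_four_div_sq_mul_sq {t : ℝ} (ht : |t| ≤ π / 2) :
    cos t ≤ 1 - 4 / π ^ 2 * t ^ 2 := by
  have hπ := pi_pos
  have hchord := mul_sin_le_mul_sin (u := |t| / 2) (a := π / 4) (by positivity) (by linarith)
    (by linarith)
  rw [sin_pi_div_four] at hchord
  have hsq : 4 / π ^ 2 * t ^ 2 ≤ 2 * sin (|t| / 2) ^ 2 := by
    have h2 : √2 ^ 2 = 2 := sq_sqrt zero_le_two
    rw [div_mul_eq_mul_div, div_le_iff₀ (by positivity), ← sq_abs t]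
    nlinarith [pow_le_pow_left₀ (by positivity) hchord 2]
  calc cos t = 1 - 2 * sin (|t| / 2) ^ 2 := by
        rw [← cos_abs, ← cos_two_mul_eq_one_sub, mul_div_cancel₀ _ two_ne_zero]
    _ ≤ 1 - 4 / π ^ 2 * t ^ 2 := by linarith

lemma sin_le_four_div_sq_mul {x : ℝ} (hx0 : 0 ≤ x) (hxπ : x ≤ π) :
    sin x ≤ 4 / π ^ 2 * (x * (π - x)) := by
  have ht : |x - π / 2| ≤ π / 2 := abs_le.2 ⟨by linarith, by linarith⟩
  calc sin x = cos (x - π / 2) := by rw [cos_sub_pi_div_two]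
    _ ≤ 1 - 4 / π ^ 2 * (x - π / 2) ^ 2 := cos_le_one_sub_four_div_sq_mul_sq ht
    _ = 4 / π ^ 2 * (x * (π - x)) := by field_simp; ring

lemma mul_sin_pow_div_le (k : ℕ) {C E x : ℝ} (hC : 0 ≤ C) (hE : 0 ≤ E) (hx : x ∈ Set.Ioo 0 π) :
    C * sin x ^ k / (x ^ k * (π - x) ^ k / E) ≤
      C * sin (π / 2) ^ k / ((π / 2) ^ k * (π - π / 2) ^ k / E) := by
  have hform (y : ℝ) : C * sin y ^ k / (y ^ k * (π - y) ^ k / E) =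
      C * E * (sin y / (y * (π - y))) ^ k := by
    rw [div_div_eq_mul_div, div_pow, mul_pow]; ring
  obtain ⟨hx0, hxπ⟩ := hx
  have hratio : sin x / (x * (π - x)) ≤ sin (π / 2) / (π / 2 * (π - π / 2)) := by
    calc sin x / (x * (π - x)) ≤ 4 / π ^ 2 := by
          rw [div_le_iff₀ (by nlinarith)]; exact sin_le_four_div_sq_mul hx0.le hxπ.le
      _ = sin (π / 2) / (π / 2 * (π - π / 2)) := by rw [sin_pi_div_two]; field_simp; ring
  rw [hform, hform]
  gcongr
  exact div_nonneg (sin_nonneg_of_nonneg_of_le_pi hx0.le hxπ.le) (by nlinarith)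

lemma Gamma_mul_Gamma_add_half_mul_two_pow {s : ℝ} (n : ℕ) (hs : 2 * s = n + 1) :
    Gamma s * Gamma (s + 1 / 2) * 2 ^ n = Gamma (n + 1) * √π := by
  rw [Gamma_mul_Gamma_add_half, hs, show (1 : ℝ) - (n + 1) = -n by ring, rpow_neg zero_le_two,
    rpow_natCast]
  field_simp

lemma Gamma_div_sqrt_pi_mul_Gamma (k : ℕ) :
    Gamma ((k : ℝ) / 2 + 1) / (√π * Gamma ((k : ℝ) / 2 + 1 / 2)) =
      2 ^ k * Gamma ((k : ℝ) / 2 + 1) ^ 2 / (π * Gamma ((k : ℝ) + 1)) := by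
  have hdup := Gamma_mul_Gamma_add_half_mul_two_pow k (s := k / 2 + 1 / 2) (by ring)
  rw [show (k : ℝ) / 2 + 1 / 2 + 1 / 2 = k / 2 + 1 by ring] at hdup
  rw [div_eq_div_iff (by positivity) (by positivity)]
  linear_combination (-(√π * Gamma ((k : ℝ) / 2 + 1))) * hdup - Gamma ((k : ℝ) / 2 + 1) *
    Gamma ((k : ℝ) + 1) * sq_sqrt pi_pos.le

lemma Gamma_mul_Gamma_div_Gamma_add (k : ℕ) :
    Gamma ((k : ℝ) + 1) * Gamma ((k : ℝ) + 1) / Gamma ((k : ℝ) + 1 + ((k : ℝ) + 1)) =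
      √π * Gamma ((k : ℝ) + 1) / (2 ^ (2 * k + 1) * Gamma ((k : ℝ) + 3 / 2)) := by
  have hdup := Gamma_mul_Gamma_add_half_mul_two_pow (2 * k + 1) (s := k + 1) (by push_cast; ring)
  rw [show (k : ℝ) + 1 + 1 / 2 = k + 3 / 2 by ring,
    show ((2 * k + 1 : ℕ) : ℝ) + 1 = k + 1 + (k + 1) by push_cast; ring] at hdup
  rw [div_eq_div_iff (by positivity) (by positivity)]
  linear_combination Gamma ((k : ℝ) + 1) * hdup

theorem ratio_sup_attained_at_half_pi (k : ℕ) (hk : 1 ≤ k) :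
    (∀ x ∈ Set.Ioo (0 : ℝ) π,
        ((Gamma ((k : ℝ) / 2 + 1) / (Real.sqrt π * Gamma ((k : ℝ) / 2 + 1 / 2))) *
              Real.sin x ^ k) /
            (x ^ k * (π - x) ^ k /
              ((Gamma ((k : ℝ) + 1) * Gamma ((k : ℝ) + 1) /
                  Gamma ((k : ℝ) + 1 + ((k : ℝ) + 1))) * π ^ (2 * k + 1))) ≤
          ((Gamma ((k : ℝ) / 2 + 1) / (Real.sqrt π * Gamma ((k : ℝ) / 2 + 1 / 2))) *
              Real.sin (π / 2) ^ k) /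
            ((π / 2) ^ k * (π - π / 2) ^ k /
              ((Gamma ((k : ℝ) + 1) * Gamma ((k : ℝ) + 1) /
                  Gamma ((k : ℝ) + 1 + ((k : ℝ) + 1))) * π ^ (2 * k + 1)))) ∧
      ((Gamma ((k : ℝ) / 2 + 1) / (Real.sqrt π * Gamma ((k : ℝ) / 2 + 1 / 2))) *
            Real.sin (π / 2) ^ k) /
          ((π / 2) ^ k * (π - π / 2) ^ k /
            ((Gamma ((k : ℝ) + 1) * Gamma ((k : ℝ) + 1) /
                Gamma ((k : ℝ) + 1 + ((k : ℝ) + 1))) * π ^ (2 * k + 1))) =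
        Real.sqrt π * 2 ^ (k - 1) * Gamma ((k : ℝ) / 2 + 1) ^ 2 / Gamma ((k : ℝ) + 3 / 2) := by
  refine ⟨fun x hx => mul_sin_pow_div_le k (by positivity) (by positivity) hx, ?_⟩
  rw [Gamma_div_sqrt_pi_mul_Gamma, Gamma_mul_Gamma_div_Gamma_add, sin_pi_div_two, one_pow,
    mul_one, show π - π / 2 = π / 2 by ring, pow_sub₀ 2 two_ne_zero hk, pow_one, div_pow]
  have hπ : π = √π ^ 2 := (sq_sqrt pi_pos.le).symm
  have hs : 0 < √π := sqrt_pos.2 pi_pos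
  generalize √π = s at *
  rw [hπ]
  field_simp
  ring
end

section
/- The sequence M_k = √π · 2^(k−1) · Γ(k/2 + 1)^2 / Γ(k + 3/2) is strictly increasing for integers k ≥ 1. -/
open Real Filter Topology Finset

noncomputable def Ew (m : ℕ) : ℝ :=
  Real.Wallis.W (m + 1) * ((2 * m + 3 / 2) * (2 * m + 3) / (2 * m + 2) ^ 2)

noncomputable def Dw (m : ℕ) : ℝ :=
  Real.Wallis.W (m + 1) * ((2 * m + 3) / (2 * m + 5 / 2))

lemma Ew_step (m : ℕ) : Ew m < Ew (m + 1) := by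
  have h := Real.Wallis.W_pos (m + 1)
  rw [Ew, Ew, Real.Wallis.W_succ (m + 1), mul_assoc]
  apply mul_lt_mul_of_pos_left _ h
  have hx : (0 : ℝ) ≤ (m : ℝ) := Nat.cast_nonneg m
  push_cast
  rw [div_mul_div_comm, div_mul_div_comm, div_lt_div_iff₀ (by positivity) (by positivity)]
  nlinarith [hx, sq_nonneg ((m:ℝ)), mul_nonneg (mul_nonneg hx hx) hx]

lemma Dw_step (m : ℕ) : Dw (m + 1) < Dw m := by
  have h := Real.Wallis.W_pos (m + 1)
  rw [Dw, Dw, Real.Wallis.W_succ (m + 1), mul_assoc]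
  apply mul_lt_mul_of_pos_left _ h
  have hx : (0 : ℝ) ≤ (m : ℝ) := Nat.cast_nonneg m
  push_cast
  rw [div_mul_div_comm, div_mul_div_comm, div_lt_div_iff₀ (by positivity) (by positivity)]
  nlinarith [hx, sq_nonneg ((m:ℝ)), mul_nonneg (mul_nonneg hx hx) hx]

lemma tendsto_denom (a b : ℝ) (ha : 0 < a) : Tendsto (fun m : ℕ => a * m + b) atTop atTop := by
  apply tendsto_atTop_add_const_right
  exact tendsto_natCast_atTop_atTop.const_mul_atTop ha

lemma Ew_tendsto : Tendsto Ew atTop (𝓝 (π / 2)) := by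
  have hW : Tendsto (fun m : ℕ => Real.Wallis.W (m + 1)) atTop (𝓝 (π / 2)) :=
    Real.Wallis.tendsto_W_nhds_pi_div_two.comp (tendsto_add_atTop_nat 1)
  have hg : Tendsto (fun m : ℕ => (2 : ℝ) * m + 2) atTop atTop := tendsto_denom 2 2 two_pos
  have h1 : Tendsto (fun m : ℕ => ((1:ℝ)/2) / (2 * m + 2)) atTop (𝓝 0) :=
    tendsto_const_nhds.div_atTop hg
  have h2 : Tendsto (fun m : ℕ => (1:ℝ) / (2 * m + 2)) atTop (𝓝 0) :=
    tendsto_const_nhds.div_atTop hg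
  have hc : Tendsto (fun m : ℕ =>
      ((2 * m + 3 / 2) * (2 * m + 3) / (2 * m + 2) ^ 2 : ℝ)) atTop (𝓝 1) := by
    have h3 := ((tendsto_const_nhds.sub h1).mul (tendsto_const_nhds.add h2) :
      Tendsto (fun m : ℕ => ((1:ℝ) - (1/2)/(2*m+2)) * (1 + 1/(2*m+2))) atTop
        (𝓝 ((1 - 0) * (1 + 0))))
    norm_num at h3
    apply h3.congr
    intro m
    have hm : (0:ℝ) < 2 * m + 2 := by positivity
    field_simp
    ring
  have h4 := hW.mul hc
  norm_num at h4
  exact h4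

lemma Dw_tendsto : Tendsto Dw atTop (𝓝 (π / 2)) := by
  have hW : Tendsto (fun m : ℕ => Real.Wallis.W (m + 1)) atTop (𝓝 (π / 2)) :=
    Real.Wallis.tendsto_W_nhds_pi_div_two.comp (tendsto_add_atTop_nat 1)
  have hg : Tendsto (fun m : ℕ => (2 : ℝ) * m + 5/2) atTop atTop := tendsto_denom 2 (5/2) two_pos
  have h1 : Tendsto (fun m : ℕ => ((1:ℝ)/2) / (2 * m + 5/2)) atTop (𝓝 0) :=
    tendsto_const_nhds.div_atTop hg
  have hc : Tendsto (fun m : ℕ => ((2 * m + 3) / (2 * m + 5/2) : ℝ)) atTop (𝓝 1) := by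
    have h3 := (tendsto_const_nhds.add h1 :
      Tendsto (fun m : ℕ => ((1:ℝ) + (1/2)/(2*m+5/2))) atTop (𝓝 (1 + 0)))
    norm_num at h3
    apply h3.congr
    intro m
    have hm : (0:ℝ) < 2 * m + 5/2 := by positivity
    field_simp
    ring
  have h4 := hW.mul hc
  norm_num at h4
  exact h4

lemma Ew_lt (m : ℕ) : Ew m < π / 2 :=
  lt_of_lt_of_le (Ew_step m)
    ((strictMono_nat_of_lt_succ Ew_step).monotone.ge_of_tendsto Ew_tendsto (m + 1))

lemma Dw_gt (m : ℕ) : π / 2 < Dw m :=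
  lt_of_le_of_lt
    ((strictAnti_nat_of_succ_lt Dw_step).antitone.le_of_tendsto Dw_tendsto (m + 1))
    (Dw_step m)

lemma Gamma_half (n : ℕ) : Real.Gamma ((n : ℝ) + 1 / 2) =
    Real.sqrt π * (Nat.factorial (2 * n) : ℝ) / (2 ^ (2 * n) * (Nat.factorial n : ℝ)) := by
  induction n with
  | zero => simpa using Real.Gamma_one_half_eq
  | succ n ih =>
    have hne : ((n : ℝ) + 1 / 2) ≠ 0 := by positivity
    have e : ((n : ℝ) + 1 + 1 / 2) = ((n : ℝ) + 1 / 2) + 1 := by ring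
    rw [Nat.cast_succ, e, Real.Gamma_add_one hne, ih]
    have h1 : (0:ℝ) < (Nat.factorial n : ℝ) := by positivity
    have h2 : (0:ℝ) < ((Nat.factorial (2*n)) : ℝ) := by positivity
    rw [show 2 * (n+1) = (2*n+1) + 1 by ring, Nat.factorial_succ, Nat.factorial_succ,
      Nat.factorial_succ, show 2*n+1+1 = 2*n+2 by ring, show (2:ℝ) ^ (2*n+2) = 2^(2*n) * 4 by
        rw [pow_add]; norm_num]
    push_cast
    field_simp
    ring

lemma keyE (m : ℕ) :
    (2 * (m:ℝ) + 3 / 2) * ((Nat.factorial m : ℝ)) ^ 2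
        * ((2:ℝ) ^ (4 * (m+1)) * ((Nat.factorial (m+1) : ℝ)) ^ 2)
      < 2 * π * ((Nat.factorial (2 * (m+1)) : ℝ)) ^ 2 := by
  have h := Ew_lt m
  rw [Ew, Real.Wallis.W_eq_factorial_ratio] at h
  have hF : ((Nat.factorial (m+1) : ℝ)) = ((m:ℝ) + 1) * (Nat.factorial m : ℝ) := by
    rw [Nat.factorial_succ]; push_cast; ring
  have hN : (0:ℝ) < ((Nat.factorial (2 * (m+1)) : ℝ)) := by positivity
  have hm : (0:ℝ) < (Nat.factorial m : ℝ) := by positivity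
  have hx : (0 : ℝ) ≤ (m : ℝ) := Nat.cast_nonneg m
  have hp : (0:ℝ) < (2:ℝ) ^ (4 * (m+1)) := by positivity
  push_cast at h
  rw [div_mul_div_comm, div_lt_iff₀ (by positivity)] at h
  rw [hF] at h ⊢
  have h3 : (0:ℝ) < 2 * (m:ℝ) + 3 := by linarith
  have h4 : (0:ℝ) < ((m:ℝ) + 1) ^ 2 := by positivity
  nlinarith [h, mul_pos h3 h4]

lemma keyD (m : ℕ) :
    π * ((Nat.factorial (2 * (m+1)) : ℝ)) ^ 2 * (2 * (m:ℝ) + 5 / 2)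
      < 2 * ((2:ℝ) ^ (4 * (m+1)) * ((Nat.factorial (m+1) : ℝ)) ^ 4) := by
  have h := Dw_gt m
  rw [Dw, Real.Wallis.W_eq_factorial_ratio] at h
  have hN : (0:ℝ) < ((Nat.factorial (2 * (m+1)) : ℝ)) := by positivity
  have hF : (0:ℝ) < ((Nat.factorial (m+1) : ℝ)) := by positivity
  have hx : (0 : ℝ) ≤ (m : ℝ) := Nat.cast_nonneg m
  push_cast at h
  rw [div_mul_div_comm, lt_div_iff₀ (by positivity)] at h
  have h3 : (0:ℝ) < 2 * (m:ℝ) + 3 := by linarith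
  nlinarith [h, h3]

lemma keyGamma (k : ℕ) :
    ((k:ℝ) + 3 / 2) * Real.Gamma ((k : ℝ) / 2 + 1) ^ 2
      < 2 * Real.Gamma ((k : ℝ) / 2 + 3 / 2) ^ 2 := by
  have hpi : (0:ℝ) < π := Real.pi_pos
  have hsq : Real.sqrt π ^ 2 = π := Real.sq_sqrt hpi.le
  rcases Nat.even_or_odd k with ⟨m, rfl⟩ | ⟨m, rfl⟩
  · -- k = m + m
    have e1 : ((m + m : ℕ) : ℝ) / 2 + 1 = (m : ℝ) + 1 := by push_cast; ring
    have e2 : ((m + m : ℕ) : ℝ) / 2 + 3 / 2 = ((m + 1 : ℕ) : ℝ) + 1 / 2 := by push_cast; ring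
    rw [e1, e2, Real.Gamma_nat_eq_factorial, Gamma_half]
    have h := keyE m
    have hN : (0:ℝ) < ((Nat.factorial (2 * (m+1)) : ℝ)) := by positivity
    have hF : (0:ℝ) < ((Nat.factorial (m+1) : ℝ)) := by positivity
    have hpow : ((2:ℝ) ^ (2 * (m+1))) ^ 2 = (2:ℝ) ^ (4 * (m+1)) := by
      rw [← pow_mul]; ring_nf
    rw [div_pow, mul_pow, mul_pow, hsq,
      show (2:ℝ) * ((π * (Nat.factorial (2 * (m+1)) : ℝ) ^ 2) /
          (((2:ℝ) ^ (2 * (m+1))) ^ 2 * (Nat.factorial (m+1) : ℝ) ^ 2)) =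
        (2 * π * (Nat.factorial (2 * (m+1)) : ℝ) ^ 2) /
          (((2:ℝ) ^ (2 * (m+1))) ^ 2 * (Nat.factorial (m+1) : ℝ) ^ 2) by ring,
      lt_div_iff₀ (by positivity), hpow]
    push_cast
    nlinarith [h]
  · -- k = 2 * m + 1
    have e1 : ((2 * m + 1 : ℕ) : ℝ) / 2 + 1 = ((m + 1 : ℕ) : ℝ) + 1 / 2 := by push_cast; ring
    have e2 : ((2 * m + 1 : ℕ) : ℝ) / 2 + 3 / 2 = ((m + 1 : ℕ) : ℝ) + 1 := by push_cast; ring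
    rw [e1, e2, Real.Gamma_nat_eq_factorial, Gamma_half]
    have h := keyD m
    have hN : (0:ℝ) < ((Nat.factorial (2 * (m+1)) : ℝ)) := by positivity
    have hF : (0:ℝ) < ((Nat.factorial (m+1) : ℝ)) := by positivity
    have hpow : ((2:ℝ) ^ (2 * (m+1))) ^ 2 = (2:ℝ) ^ (4 * (m+1)) := by
      rw [← pow_mul]; ring_nf
    rw [div_pow, mul_pow, mul_pow, hsq,
      show (((2 * m + 1 : ℕ) : ℝ) + 3 / 2) * ((π * (Nat.factorial (2 * (m+1)) : ℝ) ^ 2) /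
          (((2:ℝ) ^ (2 * (m+1))) ^ 2 * (Nat.factorial (m+1) : ℝ) ^ 2)) =
        ((((2 * m + 1 : ℕ) : ℝ) + 3 / 2) * (π * (Nat.factorial (2 * (m+1)) : ℝ) ^ 2)) /
          (((2:ℝ) ^ (2 * (m+1))) ^ 2 * (Nat.factorial (m+1) : ℝ) ^ 2) by ring,
      div_lt_iff₀ (by positivity), hpow]
    push_cast
    nlinarith [h]

theorem Mk_strictMono (k : ℕ) (hk : 1 ≤ k) :
    Real.sqrt π * 2 ^ (k - 1) * Gamma ((k : ℝ) / 2 + 1) ^ 2 / Gamma ((k : ℝ) + 3 / 2) <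
      Real.sqrt π * 2 ^ (k + 1 - 1) * Gamma (((k : ℝ) + 1) / 2 + 1) ^ 2 /
        Gamma (((k : ℝ) + 1) + 3 / 2) := by
  obtain ⟨j, rfl⟩ : ∃ j, k = j + 1 := ⟨k - 1, by omega⟩
  have hpi : (0:ℝ) < π := Real.pi_pos
  have hsqrt : (0:ℝ) < Real.sqrt π := Real.sqrt_pos.mpr hpi
  have hK : (0:ℝ) < ((j + 1 : ℕ) : ℝ) := by positivity
  have hG : (0:ℝ) < Gamma (((j + 1 : ℕ) : ℝ) + 3/2) := Real.Gamma_pos_of_pos (by positivity)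
  have hA : (0:ℝ) < Gamma (((j + 1 : ℕ) : ℝ)/2 + 1) := Real.Gamma_pos_of_pos (by positivity)
  have hB : (0:ℝ) < Gamma (((j + 1 : ℕ) : ℝ)/2 + 3/2) := Real.Gamma_pos_of_pos (by positivity)
  have e1 : (((j + 1 : ℕ) : ℝ) + 1) / 2 + 1 = ((j + 1 : ℕ) : ℝ)/2 + 3/2 := by ring
  have e3 : Gamma ((((j + 1 : ℕ) : ℝ)) + 1 + 3/2)
      = (((j + 1 : ℕ) : ℝ) + 3/2) * Gamma (((j + 1 : ℕ) : ℝ) + 3/2) := by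
    rw [show (((j + 1 : ℕ) : ℝ)) + 1 + 3/2 = (((j + 1 : ℕ) : ℝ) + 3/2) + 1 by ring,
      Real.Gamma_add_one (by positivity)]
  have key := keyGamma (j + 1)
  rw [e1, e3, Nat.add_sub_cancel, Nat.add_sub_cancel, pow_succ (2:ℝ) j]
  rw [div_lt_div_iff₀ hG (by positivity)]
  have h2p : (0:ℝ) < (2:ℝ) ^ j := by positivity
  nlinarith [mul_lt_mul_of_pos_left key (mul_pos (mul_pos hsqrt h2p) hG)]
end

section
/- The limit of M_k = √π · 2^(k−1) · Γ(k/2 + 1)^2 / Γ(k + 3/2) as k → ∞ equals π / (2√2). -/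
/-!
Log-convexity of `Γ` between `x` and `x + 1` gives Wendel's bounds
`(x / (x + a)) ^ (1 - a) ≤ Γ(x + a) / (x ^ a Γ(x)) ≤ 1` for `0 < a < 1`, so `Γ(x + 1/2) ~ √x Γ(x)`.
The duplication formula at `s = k/2 + 1` turns `M_k` into
`π/4 · (Γ(k + 2) / Γ(k + 3/2)) / (Γ(s + 1/2) / Γ(s))`,
which is therefore asymptotic to `π/4 · √((k + 3/2) / s) → π/4 · √2`.
-/

open Real Filter Topology

namespace Real

theorem Gamma_add_le_rpow_mul_Gamma {x a : ℝ} (hx : 0 < x) (ha₀ : 0 < a) (ha₁ : a < 1) :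
    Gamma (x + a) ≤ x ^ a * Gamma x := by
  have h := Gamma_mul_add_mul_le_rpow_Gamma_mul_rpow_Gamma (t := x + 1) hx
    (by linarith) (sub_pos.2 ha₁) ha₀ (sub_add_cancel 1 a)
  have hΓ := Gamma_pos_of_pos hx
  rwa [show (1 - a) * x + a * (x + 1) = x + a by ring, Gamma_add_one hx.ne',
    mul_rpow hx.le hΓ.le, mul_left_comm, ← rpow_add hΓ, sub_add_cancel, rpow_one] at h

theorem mul_Gamma_le_rpow_mul_Gamma_add {x a : ℝ} (hx : 0 < x) (ha₀ : 0 < a) (ha₁ : a < 1) :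
    x * Gamma x ≤ (x + a) ^ (1 - a) * Gamma (x + a) := by
  have h := Gamma_add_le_rpow_mul_Gamma (add_pos hx ha₀) (sub_pos.2 ha₁) (sub_lt_self 1 ha₀)
  rwa [add_add_sub_cancel, Gamma_add_one hx.ne'] at h

theorem tendsto_Gamma_add_div_rpow_mul_Gamma {a : ℝ} (ha₀ : 0 < a) (ha₁ : a < 1) :
    Tendsto (fun x => Gamma (x + a) / (x ^ a * Gamma x)) atTop (𝓝 1) := by
  have hfrac : Tendsto (fun x : ℝ => x / (x + a)) atTop (𝓝 1) := by
    have h := tendsto_const_nhds (x := (1 : ℝ)).sub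
      ((tendsto_const_nhds (x := a)).div_atTop (tendsto_atTop_add_const_right _ a tendsto_id))
    rw [sub_zero] at h
    refine h.congr' ?_
    filter_upwards [eventually_gt_atTop 0] with x hx
    have : x + a ≠ 0 := by linarith
    simp only [id]
    field_simp
    ring
  have hlower := (hfrac.rpow_const (p := 1 - a) (Or.inl one_ne_zero))
  rw [one_rpow] at hlower
  refine tendsto_of_tendsto_of_tendsto_of_le_of_le' hlower tendsto_const_nhds ?_ ?_
  · filter_upwards [eventually_gt_atTop 0] with x hx
    have hΓ := Gamma_pos_of_pos hx
    have hxa := add_pos hx ha₀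
    rw [le_div_iff₀ (by positivity), div_rpow hx.le hxa.le, div_mul_eq_mul_div,
      div_le_iff₀ (by positivity)]
    calc x ^ (1 - a) * (x ^ a * Gamma x) = x * Gamma x := by
          rw [← mul_assoc, ← rpow_add hx, sub_add_cancel, rpow_one]
      _ ≤ (x + a) ^ (1 - a) * Gamma (x + a) := mul_Gamma_le_rpow_mul_Gamma_add hx ha₀ ha₁
      _ = Gamma (x + a) * (x + a) ^ (1 - a) := mul_comm _ _
  · filter_upwards [eventually_gt_atTop 0] with x hx
    exact div_le_one_of_le₀ (Gamma_add_le_rpow_mul_Gamma hx ha₀ ha₁)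
      (mul_pos (rpow_pos_of_pos hx a) (Gamma_pos_of_pos hx)).le

end Real

theorem sqrt_pi_mul_two_pow_mul_Gamma_sq_div_Gamma_eq {k : ℕ} (hk : 1 ≤ k) :
    √π * 2 ^ (k - 1) * Gamma ((k : ℝ) / 2 + 1) ^ 2 / Gamma ((k : ℝ) + 3 / 2) =
      π / 4 * (Gamma ((k + 3 / 2) + 1 / 2) / ((k + 3 / 2) ^ (1 / 2 : ℝ) * Gamma (k + 3 / 2)) /
        (Gamma ((k / 2 + 1) + 1 / 2) / ((k / 2 + 1) ^ (1 / 2 : ℝ) * Gamma (k / 2 + 1)))) *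
        (((k : ℝ) + 3 / 2) / (k / 2 + 1)) ^ (1 / 2 : ℝ) := by
  have hpow : (2 : ℝ) ^ (k - 1) * 2 ^ (1 - 2 * ((k : ℝ) / 2 + 1)) = 1 / 4 := by
    rw [← rpow_natCast, Nat.cast_sub hk, ← rpow_add two_pos,
      show ((k : ℝ) - (1 : ℕ)) + (1 - 2 * (k / 2 + 1)) = -2 by push_cast; ring]
    norm_num [rpow_neg]
  have hdup : √π * 2 ^ (k - 1) * (Gamma ((k : ℝ) / 2 + 1) * Gamma ((k : ℝ) / 2 + 1 + 1 / 2)) =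
      π / 4 * Gamma (2 * ((k : ℝ) / 2 + 1)) := by
    rw [Gamma_mul_Gamma_add_half]
    linear_combination (2 ^ (k - 1) * 2 ^ (1 - 2 * ((k : ℝ) / 2 + 1)) *
      Gamma (2 * ((k : ℝ) / 2 + 1))) * mul_self_sqrt pi_pos.le +
      (π * Gamma (2 * ((k : ℝ) / 2 + 1))) * hpow
  rw [show (k : ℝ) + 3 / 2 + 1 / 2 = 2 * ((k : ℝ) / 2 + 1) by ring,
    div_rpow (by positivity) (by positivity)]
  have h1 : Gamma ((k : ℝ) / 2 + 1) ≠ 0 := (Gamma_pos_of_pos (by positivity)).ne'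
  have h2 : Gamma ((k : ℝ) / 2 + 1 + 1 / 2) ≠ 0 := (Gamma_pos_of_pos (by positivity)).ne'
  have h3 : Gamma ((k : ℝ) + 3 / 2) ≠ 0 := (Gamma_pos_of_pos (by positivity)).ne'
  have h4 : ((k : ℝ) + 3 / 2) ^ (1 / 2 : ℝ) ≠ 0 := by positivity
  have h5 : ((k : ℝ) / 2 + 1) ^ (1 / 2 : ℝ) ≠ 0 := by positivity
  generalize Gamma ((k : ℝ) / 2 + 1) = A at *
  generalize Gamma ((k : ℝ) / 2 + 1 + 1 / 2) = B at *
  generalize Gamma (2 * ((k : ℝ) / 2 + 1)) = D at *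
  field_simp
  linear_combination 4 * hdup

theorem Mk_tendsto_limit :
    Filter.Tendsto
      (fun k : ℕ =>
        Real.sqrt π * 2 ^ (k - 1) * Gamma ((k : ℝ) / 2 + 1) ^ 2 / Gamma ((k : ℝ) + 3 / 2))
      Filter.atTop (nhds (π / (2 * Real.sqrt 2))) := by
  have hW := tendsto_Gamma_add_div_rpow_mul_Gamma (a := 1 / 2) (by norm_num) (by norm_num)
  have hcast : Tendsto (fun k : ℕ => (k : ℝ)) atTop atTop := tendsto_natCast_atTop_atTop
  have hy : Tendsto (fun k : ℕ => (k : ℝ) + 3 / 2) atTop atTop :=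
    tendsto_atTop_add_const_right _ _ hcast
  have hz : Tendsto (fun k : ℕ => (k : ℝ) / 2 + 1) atTop atTop :=
    tendsto_atTop_add_const_right _ _ (hcast.atTop_div_const two_pos)
  have hratio : Tendsto (fun k : ℕ => ((k : ℝ) + 3 / 2) / (k / 2 + 1)) atTop (𝓝 2) := by
    have h := (tendsto_const_nhds (x := (2 : ℝ))).sub
      ((tendsto_const_nhds (x := (1 / 2 : ℝ))).div_atTop hz)
    rw [sub_zero] at h
    refine h.congr fun k => ?_
    field_simp
    ring
  have hlim := (tendsto_const_nhds (x := π / 4)).mul ((hW.comp hy).div (hW.comp hz) one_ne_zero)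
    |>.mul (hratio.rpow_const (p := 1 / 2) (Or.inl two_ne_zero))
  rw [div_one, mul_one, ← sqrt_eq_rpow] at hlim
  convert hlim.congr' ?_ using 2
  · field_simp
    norm_num
  · filter_upwards [eventually_ge_atTop 1] with k hk
    exact (sqrt_pi_mul_two_pow_mul_Gamma_sq_div_Gamma_eq hk).symm
end

section
/- For every integer k ≥ 1, M_k ≤ π / (2√2), where M_k = √π · 2^(k−1) · Γ(k/2 + 1)^2 / Γ(k + 3/2); that is, the expected number of iterations per accepted sample of the rejection sampler is at most π/(2√2) ≈ 1.11 for all k ≥ 1. -/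
/-!
Log-convexity of `Γ` bounds `Γ(k/2 + 1)²` by `Γ(s) Γ(s + 1/2)` with `s = k/2 + 3/4`, and the Legendre
duplication formula evaluates that product as `Γ(k + 3/2) 2^(-k - 1/2) √π`. Substituting into `M_k`
cancels `Γ(k + 3/2)` and leaves `√π · 2^(k-1) · 2^(-k-1/2) · √π = π / (2√2)`.
-/

open Real

namespace Real

theorem Gamma_add_div_two_sq_le {a b : ℝ} (ha : 0 < a) (hb : 0 < b) :
    Gamma ((a + b) / 2) ^ 2 ≤ Gamma a * Gamma b := by
  have hconv := convexOn_log_Gamma.2 (Set.mem_Ioi.2 ha) (Set.mem_Ioi.2 hb)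
    (by norm_num : (0 : ℝ) ≤ 1 / 2) (by norm_num : (0 : ℝ) ≤ 1 / 2) (by norm_num)
  have hmid : (1 / 2 : ℝ) • a + (1 / 2 : ℝ) • b = (a + b) / 2 := by
    simp only [smul_eq_mul]; ring
  rw [hmid] at hconv
  simp only [Function.comp_apply, smul_eq_mul] at hconv
  have hΓa := Gamma_pos_of_pos ha
  have hΓb := Gamma_pos_of_pos hb
  have hΓmid := Gamma_pos_of_pos (half_pos (add_pos ha hb))
  rw [← log_le_log_iff (by positivity) (by positivity), log_pow, log_mul hΓa.ne' hΓb.ne']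
  push_cast
  linarith

theorem Gamma_add_quarter_sq_le {s : ℝ} (hs : 0 < s) :
    Gamma (s + 1 / 4) ^ 2 ≤ Gamma (2 * s) * 2 ^ (1 - 2 * s) * √π := by
  rw [← Gamma_mul_Gamma_add_half, show s + 1 / 4 = (s + (s + 1 / 2)) / 2 by ring]
  exact Gamma_add_div_two_sq_le hs (by linarith)

end Real

theorem two_pow_pred_mul_two_rpow_neg {k : ℕ} (hk : 1 ≤ k) :
    (2 : ℝ) ^ (k - 1) * 2 ^ (-(k : ℝ) - 1 / 2) = (2 * √2)⁻¹ := by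
  rw [← rpow_natCast, Nat.cast_sub hk, ← rpow_add two_pos, sqrt_eq_rpow,
    ← rpow_one_add' zero_le_two (by norm_num), ← rpow_neg zero_le_two]
  ring_nf

theorem Mk_le_limit (k : ℕ) (hk : 1 ≤ k) :
    Real.sqrt π * 2 ^ (k - 1) * Gamma ((k : ℝ) / 2 + 1) ^ 2 / Gamma ((k : ℝ) + 3 / 2) ≤
      π / (2 * Real.sqrt 2) := by
  have hΓ : 0 < Gamma ((k : ℝ) + 3 / 2) := Gamma_pos_of_pos (by positivity)
  have hsq : Gamma ((k : ℝ) / 2 + 1) ^ 2 ≤ Gamma ((k : ℝ) + 3 / 2) * 2 ^ (-(k : ℝ) - 1 / 2) * √π := by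
    have h := Gamma_add_quarter_sq_le (s := (k : ℝ) / 2 + 3 / 4) (by positivity)
    convert h using 3 <;> ring_nf
  rw [div_le_iff₀ hΓ]
  calc √π * 2 ^ (k - 1) * Gamma ((k : ℝ) / 2 + 1) ^ 2
      ≤ √π * 2 ^ (k - 1) * (Gamma ((k : ℝ) + 3 / 2) * 2 ^ (-(k : ℝ) - 1 / 2) * √π) := by
        gcongr
    _ = (√π * √π) * (2 ^ (k - 1) * 2 ^ (-(k : ℝ) - 1 / 2)) * Gamma ((k : ℝ) + 3 / 2) := by ring
    _ = π / (2 * √2) * Gamma ((k : ℝ) + 3 / 2) := by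
        rw [mul_self_sqrt pi_pos.le, two_pow_pred_mul_two_rpow_neg hk]
        ring
end
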